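/- Let ρ ∈ Matrix (Fin d) (Fin d) ℂ be positive definite with trace 1, and let A be a measurement with n outcomes on ℂ^d all of whose effects are nonzero. Then the trace of F_ρ(A), which equals the real number ∑ x, tr(ρ * A x * A x) / tr(ρ * A x), is at most n; moreover it equals n if and only if every effect A x is an orthogonal projection, i.e., A x * A x = A x for all x. -/

import Mathlib

open Matrix
open scoped Kronecker ComplexOrder

noncomputable section

/-- A measurement (POVM): a finite family of positive semidefinite matrices summing to `1`. -/
def IsMeasurement {ι κ : Type*} [Fintype ι] [DecidableEq ι] [Fintype κ]
    (A : κ → Matrix ι ι ℂ) : Prop :=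
  (∀ x, (A x).PosSemidef) ∧ ∑ x, A x = 1

/-- `A` is a post-processing of `B`: `A ⪯ B`. -/
def PostProc {ι : Type*} {n m : ℕ}
    (A : Fin n → Matrix ι ι ℂ) (B : Fin m → Matrix ι ι ℂ) : Prop :=
  ∃ μ : Fin n → Fin m → ℝ,
    (∀ x y, 0 ≤ μ x y) ∧ (∀ y, ∑ x, μ x y = 1) ∧
    (∀ x, A x = ∑ y, (μ x y : ℂ) • B y)

/-- The outer product `|E⟩⟨F|` of the vectorizations of two matrices. -/
def outerProd {ι : Type*} (E F : Matrix ι ι ℂ) : Matrix (ι × ι) (ι × ι) ℂ :=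
  Matrix.of fun p q => E p.1 p.2 * star (F q.1 q.2)

/-- The positive semidefinite square root of a positive semidefinite matrix
(the definition `Matrix.PosSemidef.sqrt` of the older Mathlib, since removed). -/
noncomputable def Matrix.PosSemidef.sqrt {n : Type*} [Fintype n] [DecidableEq n]
    {A : Matrix n n ℂ} (hA : A.PosSemidef) : Matrix n n ℂ :=
  hA.1.eigenvectorUnitary.1 * diagonal ((↑) ∘ (√·) ∘ hA.1.eigenvalues) *
    (star hA.1.eigenvectorUnitary : Matrix n n ℂ)

/-- The (un-normalized) Fisher information map of a measurement. -/
noncomputable def Fisher {ι κ : Type*} [Fintype ι] [Fintype κ]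
    (A : κ → Matrix ι ι ℂ) : Matrix (ι × ι) (ι × ι) ℂ :=
  ∑ x, (Matrix.trace (A x))⁻¹ • outerProd (A x) (A x)

/-- The generalized Fisher information map of a measurement, relative to a
positive definite state `ρ` (with positive semidefinite square root `ρ^{1/2}`). -/
noncomputable def FisherRho {ι κ : Type*} [Fintype ι] [DecidableEq ι] [Fintype κ]
    {ρ : Matrix ι ι ℂ} (hρ : ρ.PosDef) (A : κ → Matrix ι ι ℂ) :
    Matrix (ι × ι) (ι × ι) ℂ :=
  ∑ x, (Matrix.trace (ρ * A x))⁻¹ •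
    outerProd (hρ.posSemidef.sqrt * A x) (hρ.posSemidef.sqrt * A x)

/-- The height of a finite family of self-adjoint matrices: the infimum of the traces of
Hermitian matrices dominating every member in the Loewner order. -/
noncomputable def height {ι κ : Type*} [Fintype ι] [Fintype κ]
    (X : κ → Matrix ι ι ℂ) : ℝ :=
  sInf { t : ℝ | ∃ H : Matrix ι ι ℂ, H.IsHermitian ∧
    (∀ i, (H - X i).PosSemidef) ∧ t = (Matrix.trace H).re }

/-!
Write `ρ = s * s` with `s = ρ^{1/2}`. The `x`-th summand of `F_ρ(A)` has trace
`tr(ρ A_x²) / tr(ρ A_x) = 1 - tr(ρ (A_x - A_x²)) / tr(ρ A_x)`. Since `0 ≤ A_x ≤ 1`, the matrix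
`A_x - A_x² = A_x^{1/2} (1 - A_x) A_x^{1/2}` is positive semidefinite, and for positive definite `ρ`
the functional `B ↦ tr(ρ B) = tr(s B s)` is nonnegative on positive semidefinite `B` and vanishes
only at `B = 0`. So each defect is nonnegative and vanishes exactly when `A_x² = A_x`.
-/

namespace Matrix

variable {ι : Type*} [Fintype ι] [DecidableEq ι]

lemma PosSemidef.sqrt_mul_sqrt {A : Matrix ι ι ℂ} (hA : A.PosSemidef) :
    hA.sqrt * hA.sqrt = A := by
  have hU : (star hA.1.eigenvectorUnitary : Matrix ι ι ℂ) * hA.1.eigenvectorUnitary = 1 :=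
    Unitary.coe_star_mul_self _
  have hD : diagonal ((↑) ∘ (√·) ∘ hA.1.eigenvalues : ι → ℂ) *
      diagonal ((↑) ∘ (√·) ∘ hA.1.eigenvalues) = diagonal (RCLike.ofReal ∘ hA.1.eigenvalues) := by
    rw [diagonal_mul_diagonal]
    congr 1
    funext i
    simp [← Complex.ofReal_mul, Real.mul_self_sqrt (hA.eigenvalues_nonneg i)]
  conv_rhs => rw [hA.1.spectral_theorem, Unitary.conjStarAlgAut_apply, ← hD]
  simp only [PosSemidef.sqrt, Matrix.mul_assoc]
  rw [← Matrix.mul_assoc (star hA.1.eigenvectorUnitary : Matrix ι ι ℂ), hU, Matrix.one_mul]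

lemma PosSemidef.posSemidef_sqrt {A : Matrix ι ι ℂ} (hA : A.PosSemidef) : hA.sqrt.PosSemidef := by
  rw [PosSemidef.sqrt, star_eq_conjTranspose]
  refine (posSemidef_diagonal_iff.mpr fun i => ?_).mul_mul_conjTranspose_same _
  exact Complex.zero_le_real.mpr (Real.sqrt_nonneg _)

lemma PosSemidef.trace_mul_eq_trace_sqrt_mul_mul_sqrt {ρ : Matrix ι ι ℂ} (hρ : ρ.PosSemidef)
    (B : Matrix ι ι ℂ) : (ρ * B).trace = (hρ.sqrt * B * hρ.sqrt).trace := by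
  calc (ρ * B).trace = (hρ.sqrt * hρ.sqrt * B).trace := by rw [hρ.sqrt_mul_sqrt]
    _ = (hρ.sqrt * B * hρ.sqrt).trace := by rw [Matrix.mul_assoc, trace_mul_comm]

lemma PosSemidef.trace_mul_nonneg {ρ B : Matrix ι ι ℂ} (hρ : ρ.PosSemidef) (hB : B.PosSemidef) :
    0 ≤ (ρ * B).trace := by
  rw [hρ.trace_mul_eq_trace_sqrt_mul_mul_sqrt]
  nth_rw 1 [← hρ.posSemidef_sqrt.isHermitian.eq]
  exact (hB.conjTranspose_mul_mul_same _).trace_nonneg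

lemma PosDef.trace_mul_eq_zero_iff {ρ B : Matrix ι ι ℂ} (hρ : ρ.PosDef) (hB : B.PosSemidef) :
    (ρ * B).trace = 0 ↔ B = 0 := by
  set s := hρ.posSemidef.sqrt
  have hsH : sᴴ = s := hρ.posSemidef.posSemidef_sqrt.isHermitian.eq
  have hs : IsUnit s := by
    have h : IsUnit (s * s).det := by
      rw [hρ.posSemidef.sqrt_mul_sqrt, ← isUnit_iff_isUnit_det]
      exact hρ.isUnit
    rw [det_mul, IsUnit.mul_iff] at h
    exact (isUnit_iff_isUnit_det s).mpr h.1
  have hsBs : (s * B * s).PosSemidef := by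
    simpa only [hsH] using hB.conjTranspose_mul_mul_same s
  rw [hρ.posSemidef.trace_mul_eq_trace_sqrt_mul_mul_sqrt, hsBs.trace_eq_zero_iff,
    hs.mul_left_eq_zero, hs.mul_right_eq_zero]

lemma PosSemidef.sub_mul_self {B : Matrix ι ι ℂ} (hB : B.PosSemidef) (hB1 : (1 - B).PosSemidef) :
    (B - B * B).PosSemidef := by
  obtain ⟨q, hqH, rfl⟩ : ∃ q : Matrix ι ι ℂ, qᴴ = q ∧ q * q = B :=
    ⟨_, hB.posSemidef_sqrt.isHermitian.eq, hB.sqrt_mul_sqrt⟩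
  simpa only [hqH, Matrix.mul_sub, Matrix.sub_mul, Matrix.mul_one, Matrix.mul_assoc]
    using hB1.conjTranspose_mul_mul_same q

end Matrix

lemma IsMeasurement.posSemidef_one_sub {ι κ : Type*} [Fintype ι] [DecidableEq ι] [Fintype κ]
    [DecidableEq κ] {A : κ → Matrix ι ι ℂ} (hA : IsMeasurement A) (x : κ) :
    (1 - A x).PosSemidef := by
  rw [← hA.2, ← Finset.sum_erase_add _ _ (Finset.mem_univ x), add_sub_cancel_right]
  exact posSemidef_sum _ fun y _ => hA.1 y

lemma trace_outerProd_self {ι : Type*} [Fintype ι] (E : Matrix ι ι ℂ) :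
    (outerProd E E).trace = (E * Eᴴ).trace := by
  simp [outerProd, trace, mul_apply, Fintype.sum_prod_type]

lemma trace_fisherRho {ι κ : Type*} [Fintype ι] [DecidableEq ι] [Fintype κ]
    {ρ : Matrix ι ι ℂ} (hρ : ρ.PosDef) (A : κ → Matrix ι ι ℂ) :
    (FisherRho hρ A).trace = ∑ x, (ρ * A x * (A x)ᴴ).trace / (ρ * A x).trace := by
  simp only [FisherRho, trace_sum, trace_smul, smul_eq_mul, trace_outerProd_self,
    conjTranspose_mul, hρ.posSemidef.posSemidef_sqrt.isHermitian.eq]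
  refine Finset.sum_congr rfl fun x _ => ?_
  rw [inv_mul_eq_div, Matrix.mul_assoc ρ,
    hρ.posSemidef.trace_mul_eq_trace_sqrt_mul_mul_sqrt (A x * (A x)ᴴ)]
  simp only [Matrix.mul_assoc]

lemma trace_mul_mul_self_div_eq_one_sub {ι : Type*} [Fintype ι] {ρ B : Matrix ι ι ℂ}
    (hB : (ρ * B).trace ≠ 0) :
    (ρ * B * B).trace / (ρ * B).trace = 1 - (ρ * (B - B * B)).trace / (ρ * B).trace := by
  rw [Matrix.mul_sub, trace_sub, ← Matrix.mul_assoc, sub_div, div_self hB, sub_sub_cancel]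

section Defect

variable {ι : Type*} [Fintype ι] [DecidableEq ι] {ρ B : Matrix ι ι ℂ}

lemma trace_mul_sub_mul_self_div_nonneg (hρ : ρ.PosDef) (hB : B.PosSemidef)
    (hB1 : (1 - B).PosSemidef) : 0 ≤ (ρ * (B - B * B)).trace / (ρ * B).trace :=
  div_nonneg (hρ.posSemidef.trace_mul_nonneg (hB.sub_mul_self hB1))
    (hρ.posSemidef.trace_mul_nonneg hB)

lemma trace_mul_sub_mul_self_div_eq_zero_iff (hρ : ρ.PosDef) (hB : B.PosSemidef)
    (hB1 : (1 - B).PosSemidef) (hB0 : B ≠ 0) :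
    (ρ * (B - B * B)).trace / (ρ * B).trace = 0 ↔ B * B = B := by
  rw [div_eq_zero_iff, or_iff_left (mt (hρ.trace_mul_eq_zero_iff hB).mp hB0),
    hρ.trace_mul_eq_zero_iff (hB.sub_mul_self hB1), sub_eq_zero, eq_comm]

end Defect

theorem stmt7_general {d n : ℕ} {ρ : Matrix (Fin d) (Fin d) ℂ} (hρ : ρ.PosDef)
    (A : Fin n → Matrix (Fin d) (Fin d) ℂ) (hA : IsMeasurement A) (hA0 : ∀ x, A x ≠ 0)
    (T : ℝ) (hT : (T : ℂ) = ∑ x, Matrix.trace (ρ * A x * A x) / Matrix.trace (ρ * A x)) :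
    Matrix.trace (FisherRho hρ A) = (T : ℂ) ∧ T ≤ (n : ℝ) ∧
      (T = (n : ℝ) ↔ ∀ x, A x * A x = A x) := by
  set δ := fun x => (ρ * (A x - A x * A x)).trace / (ρ * A x).trace
  have hδ0 : ∀ x, 0 ≤ δ x := fun x =>
    trace_mul_sub_mul_self_div_nonneg hρ (hA.1 x) (hA.posSemidef_one_sub x)
  have hTδ : (T : ℂ) = n - ∑ x, δ x := by
    calc (T : ℂ) = ∑ x, (1 - δ x) := hT.trans <| Finset.sum_congr rfl fun x _ =>
          trace_mul_mul_self_div_eq_one_sub (mt (hρ.trace_mul_eq_zero_iff (hA.1 x)).mp (hA0 x))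
      _ = n - ∑ x, δ x := by simp [Finset.sum_sub_distrib]
  refine ⟨by simp only [trace_fisherRho, (hA.1 _).isHermitian.eq, hT], ?_, ?_⟩
  · rw [← Complex.real_le_real, hTδ, Complex.ofReal_natCast]
    exact sub_le_self _ (Finset.sum_nonneg fun x _ => hδ0 x)
  · rw [← Complex.ofReal_inj, hTδ, Complex.ofReal_natCast, sub_eq_self,
      Finset.sum_eq_zero_iff_of_nonneg fun x _ => hδ0 x]
    simp only [Finset.mem_univ, true_imp_iff]
    exact forall_congr' fun x =>
      trace_mul_sub_mul_self_div_eq_zero_iff hρ (hA.1 x) (hA.posSemidef_one_sub x) (hA0 x)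

/-- Upper bound n (the number of outcomes) on the trace of the generalized Fisher
information matrix, with equality iff every effect is an orthogonal projection. -/
theorem stmt7 {d n : ℕ} {ρ : Matrix (Fin d) (Fin d) ℂ} (hρ : ρ.PosDef)
    (hρtr : Matrix.trace ρ = 1)
    (A : Fin n → Matrix (Fin d) (Fin d) ℂ) (hA : IsMeasurement A) (hA0 : ∀ x, A x ≠ 0)
    (T : ℝ) (hT : (T : ℂ) = ∑ x, Matrix.trace (ρ * A x * A x) / Matrix.trace (ρ * A x)) :
    Matrix.trace (FisherRho hρ A) = (T : ℂ) ∧ T ≤ (n : ℝ) ∧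
      (T = (n : ℝ) ↔ ∀ x, A x * A x = A x) :=
  stmt7_general hρ A hA hA0 T hT
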